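/- Let δ be an algebraic integer of degree d, let E be a finite set of Pisot numbers of degree d belonging to ℤ[δ], and let r ∈ ℚ(δ) ∩ [0,1]. Then the following are equivalent: (i) the set of Cantor real bases B ∈ E^ℕ for which d*_B(r) is ultimately periodic is exactly the set of ultimately periodic sequences B ∈ E^ℕ; (ii) there do not exist a state s ∈ O*_E(r) and two distinct non-empty words u, v ∈ E* such that T*_u(s) = s = T*_v(s) and out*_u(s) = out*_v(s) (i.e., the transducer T*_{E,r} has no two closed walks from the same state with distinct inputs and the same output). -/

import Mathlib

noncomputable section

/-- The quasi-greedy transformation `T*_β`, with `T*_β(0) = 0` and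
`T*_β(x) = βx − ⌈βx − 1⌉` for `x ≠ 0`. -/
def Tstar (β x : ℝ) : ℝ := if x = 0 then 0 else β * x - ⌈β * x - 1⌉

/-- `iterTstar B n r = (T*_{β_{n−1}} ∘ ⋯ ∘ T*_{β_0})(r)`. -/
def iterTstar (B : ℕ → ℝ) : ℕ → ℝ → ℝ
  | 0, r => r
  | n + 1, r => Tstar (B n) (iterTstar B n r)

/-- The `n`-th digit of the quasi-greedy `B`-expansion `d*_B(r)`. -/
def quasiGreedyDigit (B : ℕ → ℝ) (r : ℝ) (n : ℕ) : ℤ := ⌈B n * iterTstar B n r - 1⌉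

/-- `TstarList [β_0,…,β_{ℓ−1}] s = (T*_{β_{ℓ−1}} ∘ ⋯ ∘ T*_{β_0})(s)`. -/
def TstarList (l : List ℝ) (s : ℝ) : ℝ := l.foldl (fun x β => Tstar β x) s

/-- The output word `out*_w(s)` of the quasi-greedy transducer along the input word
`w = β_0 ⋯ β_{ℓ−1}` from state `s`: its `j`-th letter is
`⌈β_j·(T*_{β_{j−1}} ∘ ⋯ ∘ T*_{β_0})(s) − 1⌉`. -/
def outStarList : List ℝ → ℝ → List ℤ
  | [], _ => []
  | β :: t, s => ⌈β * s - 1⌉ :: outStarList t (Tstar β s)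

/-- The quasi-greedy reachable set `O*_E(r)`: the state set of the transducer `T*_{E,r}`. -/
def quasiGreedyReach (E : Set ℝ) (r : ℝ) : Set ℝ :=
  {x | ∃ l : List ℝ, (∀ β ∈ l, β ∈ E) ∧ TstarList l r = x}

/-- A Pisot number: a real algebraic integer `β > 1` all of whose Galois conjugates
other than `β` itself have absolute value `< 1`. -/
def IsPisot (β : ℝ) : Prop :=
  1 < β ∧ IsIntegral ℤ β ∧
    ∀ z : ℂ, Polynomial.aeval z (minpoly ℚ β) = 0 → z ≠ (β : ℂ) → ‖z‖ < 1

/-- A sequence is ultimately periodic. -/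
def UltimatelyPeriodic {X : Type*} (f : ℕ → X) : Prop :=
  ∃ p : ℕ, 1 ≤ p ∧ ∃ N : ℕ, ∀ n, N ≤ n → f (n + p) = f n

open IntermediateField Polynomial


lemma Tstar_nonneg (β x : ℝ) : 0 ≤ Tstar β x := by
  unfold Tstar
  split
  · norm_num
  · have := Int.ceil_lt_add_one (β * x - 1); linarith

lemma Tstar_le_one (β x : ℝ) : Tstar β x ≤ 1 := by
  unfold Tstar
  split
  · norm_num
  · have := Int.le_ceil (β * x - 1); linarith

lemma TstarList_nil (s : ℝ) : TstarList [] s = s := rfl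

lemma TstarList_cons (β : ℝ) (l : List ℝ) (s : ℝ) :
    TstarList (β :: l) s = TstarList l (Tstar β s) := rfl

lemma TstarList_append (u v : List ℝ) (s : ℝ) :
    TstarList (u ++ v) s = TstarList v (TstarList u s) := by
  simp [TstarList, List.foldl_append]

lemma outStarList_append (u v : List ℝ) (s : ℝ) :
    outStarList (u ++ v) s = outStarList u s ++ outStarList v (TstarList u s) := by
  induction u generalizing s with
  | nil => simp [outStarList, TstarList_nil]
  | cons β t ih => simp [outStarList, ih, TstarList_cons]

lemma length_outStarList (l : List ℝ) (s : ℝ) : (outStarList l s).length = l.length := by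
  induction l generalizing s with
  | nil => rfl
  | cons β t ih => simp [outStarList, ih]

/-- the word of the base sequence `B` on the window `[n, n+m)` -/
def wordB (B : ℕ → ℝ) (n m : ℕ) : List ℝ := List.ofFn fun i : Fin m => B (n + i)

lemma wordB_succ (B : ℕ → ℝ) (n m : ℕ) :
    wordB B n (m + 1) = wordB B n m ++ [B (n + m)] := by
  unfold wordB
  rw [List.ofFn_succ']
  simp [List.concat_eq_append]

lemma iterTstar_add (B : ℕ → ℝ) (r : ℝ) (n m : ℕ) :
    iterTstar B (n + m) r = TstarList (wordB B n m) (iterTstar B n r) := by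
  induction m with
  | zero => simp [wordB, TstarList_nil]
  | succ m ih =>
      show Tstar (B (n + m)) (iterTstar B (n + m) r) = _
      rw [ih, wordB_succ, TstarList_append]
      rfl

lemma iterTstar_eq (B : ℕ → ℝ) (r : ℝ) (m : ℕ) :
    iterTstar B m r = TstarList (wordB B 0 m) r := by
  have := iterTstar_add B r 0 m
  simpa [iterTstar] using this

lemma outStarList_wordB (B : ℕ → ℝ) (r : ℝ) (n m : ℕ) :
    outStarList (wordB B n m) (iterTstar B n r)
      = List.ofFn fun i : Fin m => quasiGreedyDigit B r (n + i) := by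
  induction m with
  | zero => simp [wordB, outStarList]
  | succ m ih =>
      rw [wordB_succ, outStarList_append, ih, List.ofFn_succ']
      simp only [List.concat_eq_append]
      congr 1
      show outStarList [B (n + m)] (TstarList (wordB B n m) (iterTstar B n r)) = _
      rw [← iterTstar_add]
      simp [outStarList, quasiGreedyDigit]

lemma mem_wordB {B : ℕ → ℝ} {E : Finset ℝ} (hB : ∀ n, B n ∈ E) (n m : ℕ) :
    ∀ β ∈ wordB B n m, β ∈ E := by
  intro β hβ
  rw [wordB, List.mem_ofFn] at hβ
  obtain ⟨i, rfl⟩ := hβ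
  exact hB _

lemma iterTstar_mem_reach {B : ℕ → ℝ} {E : Finset ℝ} (hB : ∀ n, B n ∈ E) (r : ℝ) (n : ℕ) :
    iterTstar B n r ∈ quasiGreedyReach (E : Set ℝ) r :=
  ⟨wordB B 0 n, fun β hβ => mem_wordB hB 0 n β hβ, (iterTstar_eq B r n).symm⟩

lemma up_mul {X : Type*} {f : ℕ → X} {p N : ℕ} (h : ∀ n, N ≤ n → f (n + p) = f n) :
    ∀ k, ∀ n, N ≤ n → f (n + k * p) = f n := by
  intro k
  induction k with
  | zero => simp
  | succ k ih =>
      intro n hn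
      have : n + (k + 1) * p = (n + k * p) + p := by ring
      rw [this, h _ (le_trans hn (Nat.le_add_right _ _)), ih n hn]

/-- characteristic sequence of the squares -/
def csq (k : ℕ) : Bool := decide (Nat.sqrt k * Nat.sqrt k = k)

lemma csq_not_up : ¬ UltimatelyPeriodic csq := by
  rintro ⟨p, hp, N, hper⟩
  set M := p + N + 1 with hM
  have hMN : N ≤ M * M := by nlinarith
  have h1 : csq (M * M) = true := by
    have : Nat.sqrt (M * M) = M := by
      have := Nat.sqrt_eq' M
      simpa [pow_two] using this
    simp [csq, this]
  have h2 : csq (M * M + p) = true := (hper _ hMN).trans h1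
  rw [csq, decide_eq_true_eq] at h2
  set m := Nat.sqrt (M * M + p) with hm
  have hgt : M * M < m * m := by omega
  have hMm : M < m := by
    by_contra h
    push_neg at h
    exact absurd (Nat.mul_le_mul h h) (by omega)
  have : (M + 1) * (M + 1) ≤ m * m := Nat.mul_le_mul hMm hMm
  nlinarith

/-- Direction (i) → (ii), contrapositive form: from two distinct closed walks with the
same output we build a non-ultimately-periodic base whose digit sequence is
ultimately periodic. -/
lemma exists_bad_base (E : Finset ℝ) (r : ℝ)
    (hW : ∃ s ∈ quasiGreedyReach (E : Set ℝ) r, ∃ u v : List ℝ,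
        u ≠ [] ∧ v ≠ [] ∧ u ≠ v ∧
        (∀ β ∈ u, β ∈ E) ∧ (∀ β ∈ v, β ∈ E) ∧
        TstarList u s = s ∧ TstarList v s = s ∧
        outStarList u s = outStarList v s) :
    ∃ B : ℕ → ℝ, (∀ n, B n ∈ E) ∧
      UltimatelyPeriodic (quasiGreedyDigit B r) ∧ ¬ UltimatelyPeriodic B := by
  obtain ⟨s, ⟨w0, hw0E, hw0⟩, u, v, hu0, hv0, huv, huE, hvE, hTu, hTv, hout⟩ := hW
  set ℓ := u.length with hℓdef
  have hℓ : 0 < ℓ := List.length_pos_iff.mpr hu0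
  have hlv : v.length = ℓ := by
    have := congrArg List.length hout
    rw [length_outStarList, length_outStarList] at this
    omega
  set blk : ℕ → List ℝ := fun k => if csq k then u else v with hblk
  have hblkE : ∀ k, ∀ β ∈ blk k, β ∈ E := by
    intro k β hβ
    by_cases h : csq k <;> simp [hblk, h] at hβ <;> [exact huE β hβ; exact hvE β hβ]
  have hblklen : ∀ k, (blk k).length = ℓ := by
    intro k; by_cases h : csq k <;> simp [hblk, h, hlv, hℓdef]
  have hblkT : ∀ k, TstarList (blk k) s = s := by
    intro k; by_cases h : csq k <;> simp [hblk, h, hTu, hTv]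
  have hblkout : ∀ k, outStarList (blk k) s = outStarList u s := by
    intro k; by_cases h : csq k <;> simp [hblk, h, hout]
  set L0 := w0.length with hL0
  set B : ℕ → ℝ := fun n =>
    if h : n < L0 then w0.getD n 1 else (blk ((n - L0) / ℓ)).getD ((n - L0) % ℓ) 1 with hB
  have hBval : ∀ k i, i < ℓ → B (L0 + k * ℓ + i) = (blk k).getD i 1 := by
    intro k i hi
    have h1 : ¬ (L0 + k * ℓ + i < L0) := by omega
    have h2 : L0 + k * ℓ + i - L0 = k * ℓ + i := by omega
    have h3 : (k * ℓ + i) / ℓ = k := by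
      rw [mul_comm k ℓ, Nat.mul_add_div hℓ, Nat.div_eq_of_lt hi]
      omega
    have h4 : (k * ℓ + i) % ℓ = i := by
      rw [mul_comm k ℓ, Nat.mul_add_mod, Nat.mod_eq_of_lt hi]
    show (if h : L0 + k * ℓ + i < L0 then _ else _) = _
    rw [dif_neg h1, h2, h3, h4]
  have hBE : ∀ n, B n ∈ E := by
    intro n
    by_cases h : n < L0
    · have hv : B n = w0.getD n 1 := dif_pos h
      rw [hv, List.getD_eq_getElem w0 1 (by omega)]
      exact hw0E _ (List.getElem_mem _)
    · have hv : B n = (blk ((n - L0) / ℓ)).getD ((n - L0) % ℓ) 1 := dif_neg h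
      have hlt : (n - L0) % ℓ < (blk ((n - L0) / ℓ)).length := by
        rw [hblklen]; exact Nat.mod_lt _ hℓ
      rw [hv, List.getD_eq_getElem _ 1 hlt]
      exact hblkE _ _ (List.getElem_mem _)
  have hword0 : wordB B 0 L0 = w0 := by
    apply List.ext_getElem
    · simp [wordB, hL0]
    · intro i h1 h2
      simp only [wordB, List.getElem_ofFn]
      have hi : i < L0 := h2
      have hv : B (0 + i) = w0.getD i 1 := by
        rw [Nat.zero_add]; exact dif_pos hi
      rw [hv, List.getD_eq_getElem w0 1 h2]
  have hwordk : ∀ k, wordB B (L0 + k * ℓ) ℓ = blk k := by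
    intro k
    apply List.ext_getElem
    · simp [wordB, hblklen]
    · intro i h1 h2
      simp only [wordB, List.getElem_ofFn]
      have hi : i < ℓ := by simpa [wordB] using h1
      rw [hBval k i hi, List.getD_eq_getElem _ 1 h2]
  have hstate : ∀ k, iterTstar B (L0 + k * ℓ) r = s := by
    intro k
    induction k with
    | zero => simpa [iterTstar_eq, hword0] using hw0
    | succ k ih =>
        have : L0 + (k + 1) * ℓ = (L0 + k * ℓ) + ℓ := by ring
        rw [this, iterTstar_add, hwordk k, ih, hblkT k]
  set O := outStarList u s with hO
  have hOlen : O.length = ℓ := length_outStarList u s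
  have hdig : ∀ k i, i < ℓ → quasiGreedyDigit B r (L0 + k * ℓ + i) = O.getD i 0 := by
    intro k i hi
    have h := outStarList_wordB B r (L0 + k * ℓ) ℓ
    rw [hstate k, hwordk k, hblkout k] at h
    have h2 : O.getD i 0 = quasiGreedyDigit B r (L0 + k * ℓ + i) := by
      rw [h, List.getD_eq_getElem _ 0 (by simpa using hi), List.getElem_ofFn]
    exact h2.symm
  have hsplit : ∀ m : ℕ, ∃ q i, i < ℓ ∧ m = q * ℓ + i := by
    intro m
    refine ⟨m / ℓ, m % ℓ, Nat.mod_lt _ hℓ, ?_⟩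
    rw [mul_comm]
    exact (Nat.div_add_mod m ℓ).symm
  refine ⟨B, hBE, ⟨ℓ, hℓ, L0, ?_⟩, ?_⟩
  · intro n hn
    obtain ⟨q, i, hi, hm⟩ := hsplit (n - L0)
    have hn1 : n = L0 + q * ℓ + i := by omega
    have hn2 : n + ℓ = L0 + (q + 1) * ℓ + i := by rw [add_mul, one_mul]; omega
    rw [hn1, hdig q i hi, ← hn1, hn2, hdig (q + 1) i hi]
  · rintro ⟨p, hp, N, hper⟩
    have hperℓ : ∀ n, N ≤ n → B (n + ℓ * p) = B n := fun n hn => up_mul hper ℓ n hn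
    have hj0 : ∃ j, ∃ hj : j < ℓ, u[j]'(by omega) ≠ v[j]'(by omega) := by
      by_contra hcon
      push_neg at hcon
      exact huv (List.ext_getElem (by omega) (fun i h1 h2 => hcon i (by omega)))
    obtain ⟨j0, hj0ℓ, hj0ne⟩ := hj0
    have hj0D : u.getD j0 1 ≠ v.getD j0 1 := by
      rw [List.getD_eq_getElem u 1 (by omega), List.getD_eq_getElem v 1 (by omega)]
      exact hj0ne
    have hcper : ∀ k, N ≤ k → csq (k + p) = csq k := by
      intro k hk
      have hkℓ : k ≤ k * ℓ := Nat.le_mul_of_pos_right k hℓ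
      have hk' : N ≤ L0 + k * ℓ + j0 := by omega
      have hB2 := hperℓ (L0 + k * ℓ + j0) hk'
      have heq : L0 + k * ℓ + j0 + ℓ * p = L0 + (k + p) * ℓ + j0 := by ring
      rw [heq, hBval (k + p) j0 hj0ℓ, hBval k j0 hj0ℓ] at hB2
      by_contra hne
      have e : ∀ k', csq k' = false → blk k' = v := by
        intro k' h'; simp only [hblk]; rw [h']; simp
      have e' : ∀ k', csq k' = true → blk k' = u := by
        intro k' h'; simp only [hblk]; rw [h']; simp
      cases h1 : csq k <;> cases h2 : csq (k + p)
      · exact hne (h2.trans h1.symm)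
      · rw [e' _ h2, e _ h1] at hB2; exact hj0D hB2
      · rw [e _ h2, e' _ h1] at hB2; exact hj0D hB2.symm
      · exact hne (h2.trans h1.symm)
    exact csq_not_up ⟨p, hp, N, hcper⟩

lemma digits_up_of_base_up (E : Finset ℝ) (r : ℝ)
    (hF : (quasiGreedyReach (E : Set ℝ) r).Finite)
    (B : ℕ → ℝ) (hBE : ∀ n, B n ∈ E) (hB : UltimatelyPeriodic B) :
    UltimatelyPeriodic (quasiGreedyDigit B r) := by
  obtain ⟨p, hp, N, hper⟩ := hB
  set x : ℕ → ℝ := fun n => iterTstar B n r with hx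
  set y : ℕ → ℝ := fun k => x (N + k * p) with hy
  have hBk : ∀ k n, N ≤ n → B (n + k * p) = B n := fun k n hn => up_mul hper k n hn
  have hyrec : ∀ k, y (k + 1) = TstarList (wordB B N p) (y k) := by
    intro k
    have h1 : N + (k + 1) * p = (N + k * p) + p := by ring
    have h2 : wordB B (N + k * p) p = wordB B N p := by
      unfold wordB
      congr 1
      funext i
      have : N + k * p + ↑i = (N + ↑i) + k * p := by ring
      rw [this, hBk k (N + ↑i) (Nat.le_add_right _ _)]
    show iterTstar B (N + (k + 1) * p) r = _
    rw [h1, iterTstar_add B r (N + k * p) p, h2]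
  haveI := hF.to_subtype
  have hymem : ∀ k, y k ∈ quasiGreedyReach (E : Set ℝ) r := fun k =>
    iterTstar_mem_reach hBE r _
  obtain ⟨a, b, hab, heq⟩ :=
    Finite.exists_ne_map_eq_of_infinite
      (fun k : ℕ => (⟨y k, hymem k⟩ : quasiGreedyReach (E : Set ℝ) r))
  have heq' : y a = y b := by simpa using heq
  -- wlog a < b
  obtain ⟨i, j, hij, hyij⟩ : ∃ i j, i < j ∧ y i = y j := by
    rcases lt_or_gt_of_ne hab with h | h
    · exact ⟨a, b, h, heq'⟩
    · exact ⟨b, a, h, heq'.symm⟩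
  set Q := j - i with hQ
  have hQ1 : 1 ≤ Q := by omega
  have hyQ : ∀ m, y (i + m + Q) = y (i + m) := by
    intro m
    induction m with
    | zero =>
        have : i + 0 + Q = j := by omega
        rw [this]
        simpa using hyij.symm
    | succ m ih =>
        have e1 : i + (m + 1) + Q = (i + m + Q) + 1 := by omega
        have e2 : i + (m + 1) = (i + m) + 1 := by omega
        rw [e1, e2, hyrec, hyrec, ih]
  have hxQ : ∀ m, x (N + i * p + m + Q * p) = x (N + i * p + m) := by
    intro m
    induction m with
    | zero =>
        have e1 : N + i * p + 0 + Q * p = N + (i + 0 + Q) * p := by ring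
        have e2 : N + i * p + 0 = N + (i + 0) * p := by ring
        rw [e1, e2]
        exact hyQ 0
    | succ m ih =>
        have e1 : N + i * p + (m + 1) + Q * p = (N + i * p + m + Q * p) + 1 := by omega
        have e2 : N + i * p + (m + 1) = (N + i * p + m) + 1 := by omega
        rw [e1, e2]
        show Tstar (B (N + i * p + m + Q * p)) (x (N + i * p + m + Q * p))
            = Tstar (B (N + i * p + m)) (x (N + i * p + m))
        rw [ih, hBk Q (N + i * p + m) (by omega)]
  refine ⟨Q * p, Nat.one_le_iff_ne_zero.mpr (by positivity), N + i * p, ?_⟩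
  intro n hn
  have e : n = N + i * p + (n - (N + i * p)) := by omega
  show (⌈B (n + Q * p) * iterTstar B (n + Q * p) r - 1⌉ : ℤ) = ⌈B n * iterTstar B n r - 1⌉
  have hxn : iterTstar B (n + Q * p) r = iterTstar B n r := by
    have := hxQ (n - (N + i * p))
    rw [← e] at this
    exact this
  rw [hxn, hBk Q n (by omega)]

lemma base_up_of_digits_up (E : Finset ℝ) (r : ℝ)
    (hF : (quasiGreedyReach (E : Set ℝ) r).Finite)
    (hNW : ¬ ∃ s ∈ quasiGreedyReach (E : Set ℝ) r, ∃ u v : List ℝ,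
        u ≠ [] ∧ v ≠ [] ∧ u ≠ v ∧
        (∀ β ∈ u, β ∈ E) ∧ (∀ β ∈ v, β ∈ E) ∧
        TstarList u s = s ∧ TstarList v s = s ∧
        outStarList u s = outStarList v s)
    (B : ℕ → ℝ) (hBE : ∀ n, B n ∈ E) (hd : UltimatelyPeriodic (quasiGreedyDigit B r)) :
    UltimatelyPeriodic B := by
  obtain ⟨p, hp, N, hper⟩ := hd
  haveI := hF.to_subtype
  obtain ⟨sv, hsv⟩ := Finite.exists_infinite_fiber
      (fun k : ℕ => (⟨iterTstar B (N + k * p) r, iterTstar_mem_reach hBE r _⟩ :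
        quasiGreedyReach (E : Set ℝ) r))
  set s : ℝ := (sv : ℝ) with hs
  have hsreach : s ∈ quasiGreedyReach (E : Set ℝ) r := sv.2
  set K : Set ℕ := {k | iterTstar B (N + k * p) r = s} with hK
  have hKinf : K.Infinite := by
    rw [Set.infinite_coe_iff] at hsv
    refine Set.Infinite.mono ?_ hsv
    intro k hk
    simp only [Set.mem_preimage, Set.mem_singleton_iff] at hk
    exact congrArg Subtype.val hk
  obtain ⟨k0, hk0⟩ := hKinf.nonempty
  obtain ⟨k1, hk1K, hk01⟩ := hKinf.exists_gt k0
  set q := k1 - k0 with hq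
  have hq1 : 1 ≤ q := by omega
  set L := N + k0 * p with hL
  have hsL : iterTstar B L r = s := hk0
  have hclosed : ∀ k, k ∈ K → k0 ≤ k → TstarList (wordB B L ((k - k0) * p)) s = s := by
    intro k hkK hkk
    have e1 : (k - k0) * p = k * p - k0 * p := Nat.sub_mul k k0 p
    have e2 : k0 * p ≤ k * p := Nat.mul_le_mul_right p hkk
    have h1 : L + (k - k0) * p = N + k * p := by omega
    have h2 := iterTstar_add B r L ((k - k0) * p)
    rw [h1, hsL] at h2
    rw [← h2]
    exact hkK
  set D : ℕ → List ℤ := fun m => List.ofFn (fun i : Fin m => quasiGreedyDigit B r (N + i))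
    with hD
  have hout : ∀ k, k ∈ K → ∀ m, outStarList (wordB B (N + k * p) m) s = D m := by
    intro k hkK m
    have h := outStarList_wordB B r (N + k * p) m
    rw [show iterTstar B (N + k * p) r = s from hkK] at h
    rw [h, hD]
    congr 1
    funext i
    have h2 := up_mul hper k (N + ↑i) (Nat.le_add_right _ _)
    have e : N + k * p + ↑i = (N + ↑i) + k * p := by ring
    rw [e, h2]
  have hDlen : ∀ m, (D m).length = m := by intro m; simp [hD]
  have hDget : ∀ m i (h : i < (D m).length), (D m)[i] = quasiGreedyDigit B r (N + i) := by
    intro m i h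
    simp [hD]
  have hDapp : ∀ c m2, D (c * p) ++ D m2 = D (c * p + m2) := by
    intro c m2
    apply List.ext_getElem
    · simp [hDlen]
    · intro i h1 h2
      by_cases h : i < c * p
      · rw [List.getElem_append_left (by rw [hDlen]; exact h), hDget, hDget]
      · push_neg at h
        rw [List.getElem_append_right (by rw [hDlen]; exact h), hDget, hDget]
        have h3 := up_mul hper c (N + (i - (D (c * p)).length)) (Nat.le_add_right _ _)
        have e : N + i = (N + (i - (D (c * p)).length)) + c * p := by
          rw [hDlen]; omega
        rw [e, h3]
  have hwordget : ∀ n m i (h : i < (wordB B n m).length), (wordB B n m)[i] = B (n + i) := by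
    intro n m i h
    simp [wordB]
  have hwordlen : ∀ n m, (wordB B n m).length = m := by intro n m; simp [wordB]
  set W := wordB B L (q * p) with hW
  have hTW : TstarList W s = s := hclosed k1 hk1K (le_of_lt hk01)
  have houtW : outStarList W s = D (q * p) := hout k0 hk0 (q * p)
  have hkey : ∀ k, k ∈ K → k0 < k →
      wordB B L ((k - k0) * p) ++ W = W ++ wordB B L ((k - k0) * p) := by
    intro k hkK hkk
    set a := wordB B L ((k - k0) * p) with ha
    have hTa : TstarList a s = s := hclosed k hkK (le_of_lt hkk)
    have houta : outStarList a s = D ((k - k0) * p) := hout k0 hk0 _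
    have halen : a.length = (k - k0) * p := hwordlen _ _
    have hapos : 0 < a.length := by
      rw [halen]
      exact Nat.mul_pos (by omega) (by omega)
    have hWpos : 0 < W.length := by
      rw [hW, hwordlen]
      exact Nat.mul_pos (by omega) (by omega)
    by_contra hne
    apply hNW
    refine ⟨s, hsreach, a ++ W, W ++ a, ?_, ?_, hne, ?_, ?_, ?_, ?_, ?_⟩
    · apply List.ne_nil_of_length_pos
      rw [List.length_append]
      omega
    · apply List.ne_nil_of_length_pos
      rw [List.length_append]
      omega
    · intro β hβ
      rcases List.mem_append.mp hβ with h | h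
      · exact mem_wordB hBE _ _ β h
      · exact mem_wordB hBE _ _ β h
    · intro β hβ
      rcases List.mem_append.mp hβ with h | h
      · exact mem_wordB hBE _ _ β h
      · exact mem_wordB hBE _ _ β h
    · rw [TstarList_append, hTa, hTW]
    · rw [TstarList_append, hTW, hTa]
    · rw [outStarList_append, outStarList_append, hTa, hTW, houta, houtW]
      rw [hDapp (k - k0) (q * p), hDapp q ((k - k0) * p)]
      congr 1
      omega
  have hper2 : ∀ m, B (L + m + q * p) = B (L + m) := by
    intro m
    obtain ⟨k, hkK, hkgt⟩ := hKinf.exists_gt (k0 + m + q * p)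
    have hkk : k0 < k := by omega
    have hk1' : k - k0 ≤ (k - k0) * p := Nat.le_mul_of_pos_right _ (by omega)
    have hmlt : m + q * p < (k - k0) * p := by omega
    have heq := hkey k hkK hkk
    have halen : (wordB B L ((k - k0) * p)).length = (k - k0) * p := hwordlen _ _
    have hWlen : W.length = q * p := hwordlen _ _
    have hidx : m + q * p < (wordB B L ((k - k0) * p) ++ W).length := by
      rw [List.length_append]
      omega
    have h1 : (wordB B L ((k - k0) * p) ++ W)[m + q * p]'hidx
        = (W ++ wordB B L ((k - k0) * p))[m + q * p]'(by rw [← heq]; exact hidx) := by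
      simp only [heq]
    rw [List.getElem_append_left (by omega), List.getElem_append_right (by omega)] at h1
    rw [hwordget _ _ _ (by omega), hwordget _ _ _ (by omega)] at h1
    have e1 : L + (m + q * p) = L + m + q * p := by omega
    have e2 : L + (m + q * p - W.length) = L + m := by omega
    rw [e1, e2] at h1
    exact h1
  have hqp : 1 ≤ q * p := Nat.mul_pos (by omega) (by omega)
  refine ⟨q * p, hqp, L, ?_⟩
  intro n hn
  have e : L + (n - L) = n := by omega
  have := hper2 (n - L)
  rw [e] at this
  exact this


set_option maxHeartbeats 1000000 in
lemma reach_finite (d : ℕ) (δ : ℝ) (hδint : IsIntegral ℤ δ) (hδdeg : (minpoly ℚ δ).natDegree = d)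
    (E : Finset ℝ)
    (hEpisot : ∀ β ∈ E, IsPisot β)
    (hEdeg : ∀ β ∈ E, (minpoly ℚ β).natDegree = d)
    (hEZδ : ∀ β ∈ E, ∃ P : Polynomial ℤ, Polynomial.aeval δ P = β)
    (r : ℝ) (hrQδ : ∃ P : Polynomial ℚ, Polynomial.aeval δ P = r)
    (hr0 : 0 ≤ r) (hr1 : r ≤ 1) :
    (quasiGreedyReach (E : Set ℝ) r).Finite := by
  classical
  rcases Finset.eq_empty_or_nonempty E with rfl | hEne
  · apply Set.Finite.subset (Set.finite_singleton r)
    rintro x ⟨l, hl, rfl⟩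
    cases l with
    | nil => exact Set.mem_singleton r
    | cons β t => exact absurd (hl β List.mem_cons_self) (by simp)
  have hδQ : IsIntegral ℚ δ := hδint.tower_top
  set K := ℚ⟮δ⟯ with hKdef
  haveI : FiniteDimensional ℚ K := IntermediateField.adjoin.finiteDimensional hδQ
  haveI : NumberField K := ⟨⟩
  have hfinrank : Module.finrank ℚ K = d := by
    rw [IntermediateField.adjoin.finrank hδQ, hδdeg]
  -- membership of polynomial evaluations
  have hmemZ : ∀ x : ℝ, x ∈ K → ∀ P : Polynomial ℤ, Polynomial.aeval x P ∈ K := by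
    intro x hx P
    rw [Polynomial.aeval_eq_sum_range]
    apply sum_mem
    intro i _
    exact zsmul_mem (pow_mem hx i) _
  have hmemQ : ∀ x : ℝ, x ∈ K → ∀ P : Polynomial ℚ, Polynomial.aeval x P ∈ K := by
    intro x hx P
    rw [Polynomial.aeval_eq_sum_range]
    apply sum_mem
    intro i _
    have : P.coeff i • x ^ i = (P.coeff i : ℝ) * x ^ i := by
      rw [Rat.smul_def]
    rw [this]
    exact mul_mem (SubfieldClass.ratCast_mem K _) (pow_mem hx i)
  have hδK : δ ∈ K := IntermediateField.mem_adjoin_simple_self ℚ δ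
  have hEK : ∀ β ∈ E, β ∈ K := by
    intro β hβ
    obtain ⟨P, rfl⟩ := hEZδ β hβ
    exact hmemZ δ hδK P
  have hrK : r ∈ K := by
    obtain ⟨P, rfl⟩ := hrQδ
    exact hmemQ δ hδK P
  set rhat : K := ⟨r, hrK⟩ with hrhat
  -- the real embedding
  set ι : K →+* ℂ := (algebraMap ℝ ℂ).comp (algebraMap K ℝ) with hι
  -- rigidity
  have hrigid : ∀ (φ : K →+* ℂ) (y : K), (minpoly ℚ y).natDegree = d → φ y = ι y → φ = ι := by
    intro φ y hydeg hyval
    have hyint : IsIntegral ℚ y := IsIntegral.of_finite ℚ y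
    have h1 : (IntermediateField.adjoin ℚ ({y} : Set K)).toSubalgebra = Algebra.adjoin ℚ {y} :=
      IntermediateField.adjoin_simple_toSubalgebra_of_isAlgebraic hyint.isAlgebraic
    have h3 : Module.finrank ℚ (Subalgebra.toSubmodule (Algebra.adjoin ℚ {y})) = d := by
      rw [← h1]
      have h4 := IntermediateField.adjoin.finrank hyint
      exact h4.trans hydeg
    have h5 : Algebra.adjoin ℚ {y} = ⊤ := by
      have := Submodule.eq_top_of_finrank_eq (h3.trans hfinrank.symm)
      rwa [Algebra.toSubmodule_eq_top] at this
    have h6 : Algebra.adjoin ℚ {y} ≤ AlgHom.equalizer φ.toRatAlgHom ι.toRatAlgHom := by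
      apply Algebra.adjoin_le
      intro z hz
      rcases hz with rfl
      exact hyval
    ext z
    have hz : z ∈ AlgHom.equalizer φ.toRatAlgHom ι.toRatAlgHom := h6 (h5 ▸ Algebra.mem_top)
    exact hz
  -- conjugates of elements of E are roots of the minimal polynomial
  have hroot : ∀ (φ : K →+* ℂ) (β : ℝ) (hβ : β ∈ E),
      Polynomial.aeval (φ ⟨β, hEK β hβ⟩) (minpoly ℚ β) = 0 := by
    intro φ β hβ
    have h1 : minpoly ℚ β = minpoly ℚ (⟨β, hEK β hβ⟩ : K) := by
      have h0 : minpoly ℚ ((algebraMap K ℝ) (⟨β, hEK β hβ⟩ : K)) =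
          minpoly ℚ (⟨β, hEK β hβ⟩ : K) :=
        minpoly.algebraMap_eq (algebraMap K ℝ).injective (⟨β, hEK β hβ⟩ : K)
      have hco : (algebraMap K ℝ) (⟨β, hEK β hβ⟩ : K) = β := rfl
      rw [hco] at h0
      exact h0
    have h2 : Polynomial.aeval (φ.toRatAlgHom (⟨β, hEK β hβ⟩ : K))
        (minpoly ℚ (⟨β, hEK β hβ⟩ : K)) = 0 := by
      rw [Polynomial.aeval_algHom_apply, minpoly.aeval, map_zero]
    rw [h1]
    exact h2
  -- small conjugates
  have hsmall : ∀ (φ : K →+* ℂ), φ ≠ ι → ∀ (β : ℝ) (hβ : β ∈ E), ‖φ ⟨β, hEK β hβ⟩‖ < 1 := by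
    intro φ hφ β hβ
    have hβhat : (algebraMap K ℝ) (⟨β, hEK β hβ⟩ : K) = β := rfl
    have hne : φ ⟨β, hEK β hβ⟩ ≠ (β : ℂ) := by
      intro hcon
      apply hφ
      apply hrigid φ ⟨β, hEK β hβ⟩
      · rw [← minpoly.algebraMap_eq (algebraMap K ℝ).injective (⟨β, hEK β hβ⟩ : K), hβhat]
        exact hEdeg β hβ
      · rw [hcon]; rfl
    have := (hEpisot β hβ).2.2 (φ ⟨β, hEK β hβ⟩) (hroot φ β hβ) hne
    exact this
  -- integral multiple for rhat
  have hralg : IsAlgebraic ℤ rhat :=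
    (IsFractionRing.isAlgebraic_iff ℤ ℚ K).mpr (IsAlgebraic.of_finite ℚ rhat)
  obtain ⟨qz, hqz, hqx0⟩ := hralg.exists_integral_multiple
  set qK : K := algebraMap ℤ K qz with hqK
  -- constants
  set C : ℝ := E.max' hEne + 1 with hC
  have hmax1 : 1 < E.max' hEne := (hEpisot _ (E.max'_mem hEne)).1
  have hC0 : 0 < C := by rw [hC]; linarith
  have hceil : ∀ β ∈ E, ∀ x : ℝ, 0 ≤ x → x ≤ 1 → |(⌈β * x - 1⌉ : ℝ)| ≤ C := by
    intro β hβ x hx0 hx1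
    have hβ1 : 1 < β := (hEpisot β hβ).1
    have hCb : β ≤ E.max' hEne := E.le_max' β hβ
    have h1 : β * x ≤ E.max' hEne := by nlinarith
    have h2 : (0:ℝ) ≤ β * x := mul_nonneg (by linarith) hx0
    have hup := Int.ceil_lt_add_one (β * x - 1)
    have hlo := Int.le_ceil (β * x - 1)
    rw [abs_le, hC]
    constructor <;> linarith
  -- contraction factors
  have hattne : E.attach.Nonempty := Finset.attach_nonempty_iff.mpr hEne
  set Θ : (K →+* ℂ) → ℝ := fun φ =>
    if φ = ι then 0 else E.attach.sup' hattne (fun b => ‖φ ⟨b.1, hEK b.1 b.2⟩‖) with hΘ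
  have hΘ1 : ∀ φ, Θ φ < 1 := by
    intro φ
    rw [hΘ]
    by_cases h : φ = ι
    · simp [h]
    · simp only [h, if_false]
      rw [Finset.sup'_lt_iff]
      intro b _
      exact hsmall φ h b.1 b.2
  have hΘ0 : ∀ φ, 0 ≤ Θ φ := by
    intro φ
    rw [hΘ]
    by_cases h : φ = ι
    · simp [h]
    · simp only [h, if_false]
      obtain ⟨β0, hβ0⟩ := hEne
      calc (0:ℝ) ≤ ‖φ ⟨β0, hEK β0 hβ0⟩‖ := norm_nonneg _
        _ ≤ _ := Finset.le_sup' (fun b : {x // x ∈ E} => ‖φ ⟨b.1, hEK b.1 b.2⟩‖)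
            (Finset.mem_attach E ⟨β0, hβ0⟩)
  have hΘβ : ∀ φ, φ ≠ ι → ∀ β (hβ : β ∈ E), ‖φ ⟨β, hEK β hβ⟩‖ ≤ Θ φ := by
    intro φ h β hβ
    rw [hΘ]
    simp only [h, if_false]
    exact Finset.le_sup' (fun b : {x // x ∈ E} => ‖φ ⟨b.1, hEK b.1 b.2⟩‖)
      (Finset.mem_attach E ⟨β, hβ⟩)
  set M : (K →+* ℂ) → ℝ := fun φ => max (max ‖φ rhat‖ 1) (C / (1 - Θ φ)) with hM
  have hM1 : ∀ φ, 1 ≤ M φ := fun φ => le_trans (le_max_right _ _) (le_max_left _ _)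
  set Inv : ℝ → Prop := fun x => 0 ≤ x ∧ x ≤ 1 ∧ ∃ y : K,
    (algebraMap K ℝ) y = x ∧ IsIntegral ℤ (qK * y) ∧ ∀ φ : K →+* ℂ, ‖φ y‖ ≤ M φ with hInv
  have hIr : Inv r := by
    refine ⟨hr0, hr1, rhat, rfl, ?_, ?_⟩
    · rw [hqK, ← Algebra.smul_def]
      exact hqx0
    · intro φ
      exact le_trans (le_max_left _ _) (le_max_left _ _)
  have hstep : ∀ x, Inv x → ∀ β ∈ E, Inv (Tstar β x) := by
    intro x hx β hβ
    obtain ⟨hx0, hx1, y, hy, hint, hnorm⟩ := hx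
    refine ⟨Tstar_nonneg β x, Tstar_le_one β x, ?_⟩
    by_cases hz : x = 0
    · refine ⟨0, ?_, ?_, ?_⟩
      · rw [map_zero, Tstar, if_pos hz]
      · rw [mul_zero]; exact isIntegral_zero
      · intro φ
        rw [map_zero, norm_zero]
        exact le_trans zero_le_one (hM1 φ)
    · set c : ℤ := ⌈β * x - 1⌉ with hc
      set βhat : K := ⟨β, hEK β hβ⟩ with hβhat
      have hβco : (algebraMap K ℝ) βhat = β := rfl
      have hβint : IsIntegral ℤ βhat := by
        have h0 : IsIntegral ℤ ((algebraMap K ℝ) βhat) := by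
          rw [hβco]; exact (hEpisot β hβ).2.1
        exact (isIntegral_algebraMap_iff (algebraMap K ℝ).injective).mp h0
      have hcoe : (algebraMap K ℝ) (βhat * y - (c : K)) = Tstar β x := by
        rw [map_sub, map_mul, hy, hβco, map_intCast, Tstar, if_neg hz]
      refine ⟨βhat * y - (c : K), hcoe, ?_, ?_⟩
      · have e : qK * (βhat * y - (c : K)) = βhat * (qK * y) - algebraMap ℤ K (c * qz) := by
          rw [map_mul]
          have : algebraMap ℤ K c = (c : K) := by
            rw [algebraMap_int_eq]; rfl
          rw [this, hqK]
          ring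
        rw [e]
        exact (hβint.mul hint).sub isIntegral_algebraMap
      · intro φ
        by_cases hφ : φ = ι
        · have hval : φ (βhat * y - (c : K)) = ((Tstar β x : ℝ) : ℂ) := by
            rw [hφ, hι, RingHom.comp_apply, hcoe]
            rfl
          rw [hval]
          have hnr : ‖((Tstar β x : ℝ) : ℂ)‖ = ‖Tstar β x‖ := Complex.norm_real _
          rw [hnr, Real.norm_eq_abs, abs_of_nonneg (Tstar_nonneg β x)]
          exact le_trans (Tstar_le_one β x) (hM1 φ)
        · have h0 : ‖φ (βhat * y - (c : K))‖ ≤ ‖φ βhat‖ * ‖φ y‖ + ‖φ ((c : ℤ) : K)‖ := by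
            rw [map_sub, map_mul]
            exact le_trans (norm_sub_le _ _) (by rw [norm_mul])
          have hb := hΘβ φ hφ β hβ
          have hx' := hnorm φ
          have h1 : ‖φ βhat‖ * ‖φ y‖ ≤ Θ φ * M φ :=
            mul_le_mul hb hx' (norm_nonneg _) (hΘ0 φ)
          have h2 : C / (1 - Θ φ) ≤ M φ := le_max_right _ _
          have h3 : (0:ℝ) < 1 - Θ φ := by have := hΘ1 φ; linarith
          have h4 : C ≤ (1 - Θ φ) * M φ := by
            rw [div_le_iff₀ h3] at h2
            linarith [h2]
          have h5 : ‖φ ((c : ℤ) : K)‖ ≤ C := by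
            rw [map_intCast]
            rw [Complex.norm_intCast]
            exact hceil β hβ x hx0 hx1
          calc ‖φ (βhat * y - (c : K))‖ ≤ ‖φ βhat‖ * ‖φ y‖ + ‖φ ((c : ℤ) : K)‖ := h0
            _ ≤ Θ φ * M φ + C := add_le_add h1 h5
            _ ≤ Θ φ * M φ + (1 - Θ φ) * M φ := by linarith
            _ = M φ := by ring
  have hreach : ∀ l : List ℝ, (∀ β ∈ l, β ∈ E) → ∀ x, Inv x → Inv (TstarList l x) := by
    intro l
    induction l with
    | nil => intro _ x hx; exact hx
    | cons β t ih =>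
        intro hl x hx
        rw [TstarList_cons]
        exact ih (fun γ hγ => hl γ (List.mem_cons_of_mem β hγ)) _
          (hstep x hx β (hl β List.mem_cons_self))
  set Msup : ℝ := Finset.univ.sup' ⟨ι, Finset.mem_univ ι⟩ M with hMsup
  set Bd : ℝ := |(qz : ℝ)| * Msup with hBd
  have hfin := NumberField.Embeddings.finite_of_norm_le K ℂ Bd
  apply Set.Finite.subset (Set.Finite.image (fun z : K => (algebraMap K ℝ) z / (qz : ℝ)) hfin)
  rintro x ⟨l, hl, rfl⟩
  obtain ⟨h0, h1, y, hy, hint, hnorm⟩ := hreach l hl r hIr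
  have hqKco : (algebraMap K ℝ) qK = (qz : ℝ) := by
    rw [hqK]
    have : algebraMap ℤ K qz = ((qz : ℤ) : K) := by rw [algebraMap_int_eq]; rfl
    rw [this]
    push_cast
    rfl
  refine ⟨qK * y, ⟨hint, ?_⟩, ?_⟩
  · intro φ
    rw [map_mul, norm_mul]
    have hφq : ‖φ qK‖ = |(qz : ℝ)| := by
      rw [hqK]
      have : algebraMap ℤ K qz = ((qz : ℤ) : K) := by rw [algebraMap_int_eq]; rfl
      rw [this, map_intCast]
      rw [show ((qz : ℤ) : ℂ) = (((qz : ℝ)) : ℂ) by push_cast; rfl]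
      exact Complex.norm_real _
    rw [hφq, hBd]
    apply mul_le_mul_of_nonneg_left _ (abs_nonneg _)
    exact le_trans (hnorm φ) (Finset.le_sup' M (Finset.mem_univ φ))
  · show (algebraMap K ℝ) (qK * y) / (qz : ℝ) = TstarList l r
    rw [map_mul, hy, hqKco]
    exact mul_div_cancel_left₀ _ (by exact_mod_cast hqz)


/-- Under the hypotheses of the main theorem, the Cantor real bases `B ∈ E^ℕ` for which
`d*_B(r)` is ultimately periodic are exactly the ultimately periodic (ultimately
alternate) ones if and only if the transducer `T*_{E,r}` has no two closed walks from a
same state with distinct inputs and the same output. -/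
theorem periodic_bases_iff_no_two_walks
    (d : ℕ) (δ : ℝ) (hδint : IsIntegral ℤ δ) (hδdeg : (minpoly ℚ δ).natDegree = d)
    (E : Finset ℝ)
    (hEpisot : ∀ β ∈ E, IsPisot β)
    (hEdeg : ∀ β ∈ E, (minpoly ℚ β).natDegree = d)
    (hEZδ : ∀ β ∈ E, ∃ P : Polynomial ℤ, Polynomial.aeval δ P = β)
    (r : ℝ) (hrQδ : ∃ P : Polynomial ℚ, Polynomial.aeval δ P = r)
    (hr0 : 0 ≤ r) (hr1 : r ≤ 1) :
    (∀ B : ℕ → ℝ, (∀ n, B n ∈ E) →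
        (UltimatelyPeriodic (quasiGreedyDigit B r) ↔ UltimatelyPeriodic B)) ↔
    ¬ ∃ s ∈ quasiGreedyReach (E : Set ℝ) r, ∃ u v : List ℝ,
        u ≠ [] ∧ v ≠ [] ∧ u ≠ v ∧
        (∀ β ∈ u, β ∈ E) ∧ (∀ β ∈ v, β ∈ E) ∧
        TstarList u s = s ∧ TstarList v s = s ∧
        outStarList u s = outStarList v s := by
  have hF := reach_finite d δ hδint hδdeg E hEpisot hEdeg hEZδ r hrQδ hr0 hr1
  constructor
  · intro hL
    by_contra hW
    obtain ⟨B, hBE, hdig, hnB⟩ := exists_bad_base E r hW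
    exact hnB ((hL B hBE).mp hdig)
  · intro hNW B hBE
    exact ⟨base_up_of_digits_up E r hF hNW B hBE, digits_up_of_base_up E r hF B hBE⟩
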